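/- arXiv:0712.3902 — 3 statements merged into one kernel-verified Lean document; each statement's English description precedes it below -/
import Mathlib

section
/- Let q ∈ ℝ with q^i ≠ 1 for all integers i ≥ 1, let a ∈ ℝ, and let m, n ∈ ℕ. Then the Rogers–Szegő polynomials satisfy the convolution identity h_{m+n}(a;q) = Σ_{j=0}^{min(m,n)} q^{j(j-1)/2} (-a)^j (q;q)_j · [m choose j]_q · [n choose j]_q · h_{m-j}(a;q) · h_{n-j}(a;q). (This is the coefficient form of the non-commutative addition formula 1/((t+s;q)_∞ (a(t+s);q)_∞) = Σ_j (-a)^j q^{j(j-1)/2} (q;q)_j · t^j/((q;q)_j (t;q)_∞ (at;q)_∞) · s^j/((q;q)_j (s;q)_∞ (as;q)_∞) for variables with s t = q t s.) -/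
/-!
Let `E f (a) = f (q a)` and `D f (a) = a f (a)`. Then `E D = q D E`, so the q-binomial theorem gives
`(E + D)^m f (a) = Σ_u [m,u] a^u f (q^{m-u} a)`; since `h_n = (E + D)^n 1`, this yields
`h_{m+n}(a) = Σ_u [m,u] a^u h_n(q^{m-u} a)`. Expanding `x^v` in the basis
`(x - 1)(x - q)⋯(x - q^{j-1})` gives
`h_n(x a) = Σ_j [n,j] (x - 1)⋯(x - q^{j-1}) a^j h_{n-j}(a)`.
At `x = q^{m-u}` that product is `(-1)^j q^{j(j-1)/2} (q;q)_j [m-u,j]`, and the trinomial revision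
`[m,u][m-u,j] = [m,j][m-j,u]` sums the `u`-series to `[m,j] h_{m-j}(a)`.
-/

noncomputable def qpoch (a q : ℝ) (n : ℕ) : ℝ := ∏ i ∈ Finset.range n, (1 - a * q ^ i)

noncomputable def qbinom (n k : ℕ) (q : ℝ) : ℝ :=
  qpoch q q n / (qpoch q q k * qpoch q q (n - k))

noncomputable def rogersSzego (n : ℕ) (a q : ℝ) : ℝ :=
  ∑ k ∈ Finset.range (n + 1), qbinom n k q * a ^ k

open Finset

section CommSemiring

variable {R : Type*} [CommSemiring R] (q : R)

/-- The Gaussian binomial coefficient via the q-Pascal rule; unlike `qbinom`, it carries no junk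
value when some `(q;q)_n` vanishes. -/
def qchoose : ℕ → ℕ → R
  | _, 0 => 1
  | 0, _ + 1 => 0
  | n + 1, k + 1 => q ^ (k + 1) * qchoose n (k + 1) + qchoose n k

@[simp] lemma qchoose_zero_right (n : ℕ) : qchoose q n 0 = 1 := by
  cases n <;> rfl

lemma qchoose_succ_succ (n k : ℕ) :
    qchoose q (n + 1) (k + 1) = q ^ (k + 1) * qchoose q n (k + 1) + qchoose q n k := rfl

lemma qchoose_eq_zero_of_lt {n k : ℕ} (h : n < k) : qchoose q n k = 0 := by
  induction n generalizing k with
  | zero => obtain ⟨k, rfl⟩ := Nat.exists_eq_succ_of_ne_zero h.ne'; rfl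
  | succ n ih =>
    obtain ⟨k, rfl⟩ := Nat.exists_eq_succ_of_ne_zero (Nat.ne_zero_of_lt h)
    rw [qchoose_succ_succ, ih (by omega), ih (by omega), mul_zero, add_zero]

lemma sum_qchoose_mul_of_le (g : ℕ → R) {n N : ℕ} (h : n ≤ N) :
    ∑ k ∈ range (N + 1), qchoose q n k * g k = ∑ k ∈ range (n + 1), qchoose q n k * g k :=
  (sum_subset (range_subset_range.2 (by omega)) fun k hk hk' => by
    rw [qchoose_eq_zero_of_lt q (by simpa using hk'), zero_mul]).symm

lemma sum_qchoose_succ_mul (g : ℕ → R) (n : ℕ) :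
    ∑ k ∈ range (n + 2), qchoose q (n + 1) k * g k =
      ∑ k ∈ range (n + 1), qchoose q n k * (q ^ k * g k + g (k + 1)) := by
  have shifted : ∑ k ∈ range (n + 1), q ^ (k + 1) * qchoose q n (k + 1) * g (k + 1) + g 0 =
      ∑ k ∈ range (n + 1), q ^ k * qchoose q n k * g k := by
    rw [sum_range_succ, qchoose_eq_zero_of_lt q (Nat.lt_succ_self n), sum_range_succ' _ n]
    simp
  simp only [sum_range_succ' _ (n + 1), qchoose_succ_succ, qchoose_zero_right, add_mul,
    sum_add_distrib, one_mul]
  rw [add_right_comm, shifted, ← sum_add_distrib]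
  exact sum_congr rfl fun k _ => by ring

/-- `qShiftSum q m f = (E + D)^m f` for `E f a = f (q * a)`, `D f a = a * f a`. -/
def qShiftSum (m : ℕ) (f : R → R) (a : R) : R :=
  ∑ u ∈ range (m + 1), qchoose q m u * (a ^ u * f (q ^ (m - u) * a))

@[simp] lemma qShiftSum_zero (f : R → R) : qShiftSum q 0 f = f := by
  funext a; simp [qShiftSum]

lemma qShiftSum_succ (m : ℕ) (f : R → R) (a : R) :
    qShiftSum q (m + 1) f a = qShiftSum q m f (q * a) + a * qShiftSum q m f a := by
  rw [qShiftSum, sum_qchoose_succ_mul, qShiftSum, qShiftSum, mul_sum, ← sum_add_distrib]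
  refine sum_congr rfl fun u hu => ?_
  have hqu : q ^ (m + 1 - u) * a = q ^ (m - u) * (q * a) := by
    rw [show m + 1 - u = m - u + 1 by simp at hu; omega, pow_succ]; ring
  rw [hqu, Nat.add_sub_add_right]
  ring

lemma qShiftSum_add (m n : ℕ) (f : R → R) :
    qShiftSum q (m + n) f = qShiftSum q m (qShiftSum q n f) := by
  induction m with
  | zero => simp
  | succ m ih =>
    funext a
    rw [show m + 1 + n = m + n + 1 by omega, qShiftSum_succ, qShiftSum_succ, ih]

end CommSemiring

lemma pow_eq_sum_qchoose_mul_prod {R : Type*} [CommRing R] (q x : R) (u : ℕ) :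
    x ^ u = ∑ j ∈ range (u + 1), qchoose q u j * ∏ i ∈ range j, (x - q ^ i) := by
  induction u with
  | zero => simp
  | succ u ih =>
    rw [sum_qchoose_succ_mul, pow_succ, ih, sum_mul]
    refine sum_congr rfl fun j _ => ?_
    rw [prod_range_succ]
    ring

lemma qpoch_succ (a q : ℝ) (n : ℕ) : qpoch a q (n + 1) = qpoch a q n * (1 - a * q ^ n) :=
  prod_range_succ _ _

@[simp] lemma qpoch_zero (a q : ℝ) : qpoch a q 0 = 1 := prod_range_zero _

section Real

variable {q : ℝ}

lemma qpoch_self_ne_zero (hq : ∀ i : ℕ, 1 ≤ i → q ^ i ≠ 1) (n : ℕ) :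
    qpoch q q n ≠ 0 := by
  refine prod_ne_zero_iff.2 fun i _ => sub_ne_zero.2 fun h => hq (i + 1) (by omega) ?_
  rw [pow_succ', ← h]

lemma qchoose_mul_qpoch_mul_qpoch {n k : ℕ} (h : k ≤ n) :
    qchoose q n k * qpoch q q k * qpoch q q (n - k) = qpoch q q n := by
  induction n generalizing k with
  | zero => simp [Nat.le_zero.1 h]
  | succ n ih =>
    obtain _ | k := k
    · simp
    rcases (show k ≤ n by omega).lt_or_eq with hk | rfl
    · obtain ⟨d, rfl⟩ : ∃ d, n = k + 1 + d := ⟨n - (k + 1), by omega⟩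
      have ih₁ := ih (k := k + 1) (by omega)
      have ih₂ := ih (k := k) (by omega)
      rw [show k + 1 + d - (k + 1) = d by omega, qpoch_succ _ _ k] at ih₁
      rw [show k + 1 + d - k = d + 1 by omega, qpoch_succ] at ih₂
      rw [show k + 1 + d + 1 - (k + 1) = d + 1 by omega, qchoose_succ_succ, qpoch_succ,
        qpoch_succ _ _ (k + 1 + d), qpoch_succ _ _ d]
      linear_combination (q ^ (k + 1) * (1 - q * q ^ d)) * ih₁ + (1 - q * q ^ k) * ih₂
    · have ih₁ := ih (k := k) le_rfl
      rw [Nat.sub_self, qpoch_zero, mul_one] at ih₁ ⊢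
      rw [qchoose_succ_succ, qchoose_eq_zero_of_lt q (Nat.lt_succ_self k), qpoch_succ]
      linear_combination (1 - q * q ^ k) * ih₁

lemma qchoose_eq_qbinom (hq : ∀ n, qpoch q q n ≠ 0) {n k : ℕ} (h : k ≤ n) :
    qchoose q n k = qbinom n k q := by
  rw [qbinom, eq_div_iff (mul_ne_zero (hq k) (hq _)), ← mul_assoc, qchoose_mul_qpoch_mul_qpoch h]

lemma qchoose_mul (hq : ∀ n, qpoch q q n ≠ 0) (n j s : ℕ) :
    qchoose q n (j + s) * qchoose q (j + s) j = qchoose q n j * qchoose q (n - j) s := by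
  rcases le_or_gt (j + s) n with h | h
  · obtain ⟨d, rfl⟩ : ∃ d, n = j + s + d := ⟨n - (j + s), by omega⟩
    have hA := qchoose_mul_qpoch_mul_qpoch (q := q) (show j + s ≤ j + s + d by omega)
    have hB := qchoose_mul_qpoch_mul_qpoch (q := q) (show j ≤ j + s by omega)
    have hC := qchoose_mul_qpoch_mul_qpoch (q := q) (show j ≤ j + s + d by omega)
    have hD := qchoose_mul_qpoch_mul_qpoch (q := q) (show s ≤ s + d by omega)
    rw [show j + s + d - (j + s) = d by omega] at hA
    rw [show j + s - j = s by omega] at hB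
    rw [show j + s + d - j = s + d by omega] at hC ⊢
    rw [show s + d - s = d by omega] at hD
    refine mul_right_cancel₀ (mul_ne_zero (mul_ne_zero (hq j) (hq s)) (hq d)) ?_
    linear_combination (qchoose q (j + s + d) (j + s) * qpoch q q d) * hB + hA -
      (qchoose q (j + s + d) j * qpoch q q j) * hD - hC
  · rw [qchoose_eq_zero_of_lt q h, zero_mul]
    rcases le_or_gt j n with hj | hj
    · rw [qchoose_eq_zero_of_lt q (show n - j < s by omega), mul_zero]
    · rw [qchoose_eq_zero_of_lt q hj, zero_mul]

lemma qchoose_add_comm (hq : ∀ n, qpoch q q n ≠ 0) (u j : ℕ) :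
    qchoose q (u + j) u = qchoose q (u + j) j := by
  refine mul_right_cancel₀ (mul_ne_zero (hq u) (hq j)) ?_
  have hu := qchoose_mul_qpoch_mul_qpoch (q := q) (Nat.le_add_right u j)
  have hj := qchoose_mul_qpoch_mul_qpoch (q := q) (Nat.le_add_left j u)
  rw [Nat.add_sub_cancel_left] at hu
  rw [Nat.add_sub_cancel] at hj
  linear_combination hu - hj

lemma qchoose_mul_qchoose_sub_comm (hq : ∀ n, qpoch q q n ≠ 0) (m u j : ℕ) :
    qchoose q m u * qchoose q (m - u) j = qchoose q m j * qchoose q (m - j) u := by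
  rw [← qchoose_mul hq, ← qchoose_mul hq, add_comm j u, qchoose_add_comm hq]

lemma neg_pow_mul_qpoch_mul_qchoose_succ (hq : ∀ n, qpoch q q n ≠ 0) (v j : ℕ) :
    -q ^ j * (qpoch q q (j + 1) * qchoose q v (j + 1)) =
      (q ^ v - q ^ j) * (qpoch q q j * qchoose q v j) := by
  rcases lt_or_ge j v with h | h
  · obtain ⟨d, rfl⟩ : ∃ d, v = j + 1 + d := ⟨v - (j + 1), by omega⟩
    have hA := qchoose_mul_qpoch_mul_qpoch (q := q) (show j + 1 ≤ j + 1 + d by omega)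
    have hB := qchoose_mul_qpoch_mul_qpoch (q := q) (show j ≤ j + 1 + d by omega)
    rw [show j + 1 + d - (j + 1) = d by omega] at hA
    rw [show j + 1 + d - j = d + 1 by omega, qpoch_succ] at hB
    refine mul_right_cancel₀ (hq d) ?_
    linear_combination (-q ^ j) * hA + q ^ j * hB
  · rw [qchoose_eq_zero_of_lt q (by omega : v < j + 1)]
    rcases h.eq_or_lt with rfl | h
    · ring
    · rw [qchoose_eq_zero_of_lt q h]; ring

lemma prod_pow_sub_pow (hq : ∀ n, qpoch q q n ≠ 0) (v j : ℕ) :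
    ∏ i ∈ range j, (q ^ v - q ^ i) =
      (-1) ^ j * q ^ (j * (j - 1) / 2) * qpoch q q j * qchoose q v j := by
  induction j with
  | zero => simp
  | succ j ih =>
    rw [prod_range_succ, ih, Nat.triangle_succ, pow_add]
    linear_combination (-(-1) ^ j * q ^ (j * (j - 1) / 2)) *
      neg_pow_mul_qpoch_mul_qchoose_succ hq v j

end Real

section RogersSzego

variable {q : ℝ}

lemma rogersSzego_eq_sum_qchoose (hq : ∀ n, qpoch q q n ≠ 0) (n : ℕ) (a : ℝ) :
    rogersSzego n a q = ∑ k ∈ range (n + 1), qchoose q n k * a ^ k :=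
  sum_congr rfl fun k hk => by rw [qchoose_eq_qbinom hq (Nat.lt_succ_iff.1 (mem_range.1 hk))]

lemma rogersSzego_add (hq : ∀ n, qpoch q q n ≠ 0) (m n : ℕ) (a : ℝ) :
    rogersSzego (m + n) a q =
      ∑ u ∈ range (m + 1), qchoose q m u * (a ^ u * rogersSzego n (q ^ (m - u) * a) q) := by
  have h_qShiftSum : ∀ N, (rogersSzego N · q) = qShiftSum q N 1 := fun N => by
    funext x
    simp [rogersSzego_eq_sum_qchoose hq, qShiftSum]
  calc rogersSzego (m + n) a q = qShiftSum q m (qShiftSum q n 1) a := by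
        rw [← qShiftSum_add, ← h_qShiftSum]
    _ = _ := by rw [← h_qShiftSum]; rfl

lemma sum_qchoose_mul_qchoose (hq : ∀ n, qpoch q q n ≠ 0) (n j : ℕ) (a : ℝ) :
    ∑ v ∈ range (n + 1), qchoose q n v * (qchoose q v j * a ^ v) =
      qchoose q n j * a ^ j * rogersSzego (n - j) a q := by
  rcases le_or_gt j n with h | h
  · obtain ⟨d, rfl⟩ : ∃ d, n = j + d := ⟨n - j, by omega⟩
    rw [add_assoc, sum_range_add, sum_eq_zero fun v hv => by
      rw [qchoose_eq_zero_of_lt q (mem_range.1 hv), zero_mul, mul_zero], zero_add,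
      Nat.add_sub_cancel_left, rogersSzego_eq_sum_qchoose hq, mul_sum]
    refine sum_congr rfl fun s _ => ?_
    rw [← mul_assoc, qchoose_mul hq, Nat.add_sub_cancel_left, pow_add]
    ring
  · rw [qchoose_eq_zero_of_lt q h, zero_mul, zero_mul]
    refine sum_eq_zero fun v hv => ?_
    rw [qchoose_eq_zero_of_lt q (show v < j by simp at hv; omega), zero_mul, mul_zero]

lemma rogersSzego_mul (hq : ∀ n, qpoch q q n ≠ 0) (n : ℕ) (x a : ℝ) :
    rogersSzego n (x * a) q =
      ∑ j ∈ range (n + 1),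
        (∏ i ∈ range j, (x - q ^ i)) * qchoose q n j * a ^ j * rogersSzego (n - j) a q := by
  have hx : ∀ v ∈ range (n + 1),
      x ^ v = ∑ j ∈ range (n + 1), qchoose q v j * ∏ i ∈ range j, (x - q ^ i) :=
    fun v hv => by
      rw [sum_qchoose_mul_of_le q _ (Nat.lt_succ_iff.1 (mem_range.1 hv)),
        pow_eq_sum_qchoose_mul_prod]
  rw [rogersSzego_eq_sum_qchoose hq]
  calc ∑ v ∈ range (n + 1), qchoose q n v * (x * a) ^ v
      = ∑ v ∈ range (n + 1), ∑ j ∈ range (n + 1),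
          qchoose q n v * (qchoose q v j * a ^ v) * ∏ i ∈ range j, (x - q ^ i) :=
        sum_congr rfl fun v hv => by
          rw [mul_pow, hx v hv, sum_mul, mul_sum]
          exact sum_congr rfl fun j _ => by ring
    _ = ∑ j ∈ range (n + 1),
          (∑ v ∈ range (n + 1), qchoose q n v * (qchoose q v j * a ^ v)) *
            ∏ i ∈ range j, (x - q ^ i) := by
        rw [sum_comm]; simp_rw [sum_mul]
    _ = _ := sum_congr rfl fun j _ => by rw [sum_qchoose_mul_qchoose hq]; ring

lemma sum_qchoose_mul_qchoose_sub (hq : ∀ n, qpoch q q n ≠ 0) (m j : ℕ) (a : ℝ) :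
    ∑ u ∈ range (m + 1), qchoose q m u * qchoose q (m - u) j * a ^ u =
      qchoose q m j * rogersSzego (m - j) a q := by
  simp_rw [qchoose_mul_qchoose_sub_comm hq m _ j, mul_assoc, ← mul_sum]
  rw [sum_qchoose_mul_of_le q _ (Nat.sub_le m j), rogersSzego_eq_sum_qchoose hq]

lemma rogersSzego_add_eq_sum (hq : ∀ n, qpoch q q n ≠ 0) (m n : ℕ) (a : ℝ) :
    rogersSzego (m + n) a q =
      ∑ j ∈ range (n + 1), (-1) ^ j * q ^ (j * (j - 1) / 2) * qpoch q q j *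
        qchoose q n j * a ^ j * rogersSzego (n - j) a q *
          (qchoose q m j * rogersSzego (m - j) a q) := by
  simp_rw [rogersSzego_add hq, rogersSzego_mul hq, prod_pow_sub_pow hq, mul_sum]
  rw [sum_comm]
  refine sum_congr rfl fun j _ => ?_
  rw [← sum_qchoose_mul_qchoose_sub hq, mul_sum]
  exact sum_congr rfl fun u _ => by ring

end RogersSzego

/-- Convolution identity for the Rogers–Szegő polynomials (coefficient form of
the non-commutative addition formula). -/
theorem rogers_szego_convolution (q a : ℝ) (hq : ∀ i : ℕ, 1 ≤ i → q ^ i ≠ 1)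
    (m n : ℕ) :
    rogersSzego (m + n) a q =
      ∑ j ∈ Finset.range (min m n + 1),
        q ^ (j * (j - 1) / 2) * (-a) ^ j * qpoch q q j *
          qbinom m j q * qbinom n j q *
          rogersSzego (m - j) a q * rogersSzego (n - j) a q := by
  have hq' := qpoch_self_ne_zero hq
  rw [rogersSzego_add_eq_sum hq']
  refine (sum_subset (range_subset_range.2 (by omega)) fun j hj hj' => ?_).symm.trans
    (sum_congr rfl fun j hj => ?_)
  · rw [qchoose_eq_zero_of_lt q (show m < j by simp at hj hj'; omega)]
    ring
  · have hjm : j ≤ m := by simp at hj; omega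
    have hjn : j ≤ n := by simp at hj; omega
    rw [qchoose_eq_qbinom hq' hjm, qchoose_eq_qbinom hq' hjn, neg_pow]
    ring
end

section
/- Let 0 < q < 1, a < 0, and y, t ∈ ℝ with |y| < 1, |a y| < 1, |t| < 1, |a t| < 1. Define f(x) = (q x;q)_∞ (q x/a;q)_∞ / ((x y;q)_∞ (x t;q)_∞). Then the series Σ_{n=0}^∞ q^n ( f(q^n) - a f(a q^n) ) converges absolutely and ((y;q)_∞ (a y;q)_∞ / ((q;q)_∞ (a;q)_∞ (q/a;q)_∞)) · Σ_{n=0}^∞ q^n ( f(q^n) - a f(a q^n) ) = (a y t;q)_∞ / ((t;q)_∞ (a t;q)_∞). (This evaluates the bilinear generating function of the Al-Salam–Carlitz functional: the left-hand side is ((y,ay;q)_∞/((1-q)(q,a,q/a;q)_∞)) ∫_a^1 (qx,qx/a;q)_∞/((xy,xt;q)_∞) d_q x, where the Jackson q-integral is ∫_a^1 g(x) d_q x = (1-q) Σ_{n≥0} q^n (g(q^n) - a g(a q^n)).) -/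
/-!
Write `F(y, t)` for the Jackson sum on the left. The potential
`Ψ(x) = (x, x/a; q)_∞ / (xy, xt; q)_∞` vanishes at `x = 1` and `x = a`, and its `q`-difference
`Ψ(x) - Ψ(qx)` is `x (α + β x)` times the integrand. Summed over the lattice
`{qⁿ} ∪ {a qⁿ}` it telescopes to `0`, which is the `q`-difference equation
`(1 - a y t) F(y, q t) = (1 - t)(1 - a t) F(y, t)`. Iterating it and letting `qᵏ t → 0`
(dominated convergence) gives `(t, a t; q)_∞ F(y, t) = (a y t; q)_∞ F(y, 0)`. Since `F` is
symmetric in `y, t`, the same identity reduces `F(y, 0)` to `F(0, 0)`, and `F(0, 0)` to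
`F(0, q)`, where the integrand is `(q x / a; q)_∞` and the sum telescopes directly.
-/

/-- The infinite q-shifted factorial `(a;q)_∞ = ∏_{i=0}^∞ (1 - a q^i)`. -/
noncomputable def qpochInf (a q : ℝ) : ℝ := ∏' i : ℕ, (1 - a * q ^ i)

open Filter Topology

section QPochhammer

variable {q : ℝ}

theorem summable_norm_neg_mul_pow (hq : |q| < 1) (c : ℝ) :
    Summable fun i : ℕ => ‖-(c * q ^ i)‖ := by
  simpa [norm_mul, norm_pow] using
    (summable_geometric_of_lt_one (abs_nonneg q) hq).mul_left |c|

theorem hasProd_qpochInf (hq : |q| < 1) (c : ℝ) :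
    HasProd (fun i : ℕ => 1 - c * q ^ i) (qpochInf c q) := by
  have h := (multipliable_one_add_of_summable (summable_norm_neg_mul_pow hq c)).hasProd
  simp only [← sub_eq_add_neg] at h
  exact h

theorem qpochInf_eq_one_sub_mul (hq : |q| < 1) (c : ℝ) :
    qpochInf c q = (1 - c) * qpochInf (c * q) q := by
  have hm : Multipliable fun i : ℕ => 1 - c * q ^ (i + 1) := by
    refine (hasProd_qpochInf hq (c * q)).multipliable.congr fun i => ?_
    ring
  have h := tprod_eq_zero_mul' (f := fun i : ℕ => 1 - c * q ^ i) hm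
  simp only [pow_zero, mul_one] at h
  rw [qpochInf, h, qpochInf]
  congr 1
  exact tprod_congr fun i => by ring

@[simp]
theorem qpochInf_zero_left (q : ℝ) : qpochInf 0 q = 1 := by
  simp [qpochInf]

theorem qpochInf_one_left (hq : |q| < 1) : qpochInf 1 q = 0 := by
  rw [qpochInf_eq_one_sub_mul hq, sub_self, zero_mul]

theorem one_sub_mul_pow_pos (hq0 : 0 ≤ q) (hq1 : q < 1) {c : ℝ} (hc : c < 1) (i : ℕ) :
    0 < 1 - c * q ^ i := by
  rcases le_or_gt c 0 with h | h
  · nlinarith [pow_nonneg hq0 i]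
  · nlinarith [pow_le_one₀ hq0 hq1.le (n := i)]

theorem qpochInf_pos (hq0 : 0 ≤ q) (hq1 : q < 1) {c : ℝ} (hc : c < 1) : 0 < qpochInf c q := by
  have hq : |q| < 1 := by rwa [abs_of_nonneg hq0]
  have hfac := one_sub_mul_pow_pos hq0 hq1 hc
  have hnonneg : 0 ≤ qpochInf c q := ge_of_tendsto' (hasProd_qpochInf hq c).tendsto_prod_nat
    fun k => (Finset.prod_pos fun i _ => hfac i).le
  have hne := tprod_one_add_ne_zero_of_summable
    (fun i => by simpa [← sub_eq_add_neg] using (hfac i).ne') (summable_norm_neg_mul_pow hq c)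
  simp only [← sub_eq_add_neg] at hne
  exact hnonneg.lt_of_ne' hne

theorem qpochInf_anti (hq0 : 0 ≤ q) (hq1 : q < 1) {c c' : ℝ} (h : c' ≤ c) (hc : c < 1) :
    qpochInf c q ≤ qpochInf c' q := by
  have hq : |q| < 1 := by rwa [abs_of_nonneg hq0]
  refine le_of_tendsto_of_tendsto' (hasProd_qpochInf hq c).tendsto_prod_nat
    (hasProd_qpochInf hq c').tendsto_prod_nat fun k =>
      Finset.prod_le_prod (fun i _ => (one_sub_mul_pow_pos hq0 hq1 hc i).le) fun i _ => ?_
  nlinarith [pow_nonneg hq0 i]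

theorem continuous_qpochInf (hq : |q| < 1) : Continuous (qpochInf · q) := by
  refine continuous_iff_continuousAt.2 fun c => ?_
  set K := Metric.closedBall (0 : ℝ) (|c| + 1)
  have hK : K ∈ 𝓝 c := Metric.closedBall_mem_nhds_of_mem (by simp)
  refine ContinuousOn.continuousAt ?_ hK
  have hprod := Summable.hasProdUniformlyOn_nat_one_add (f := fun i x => -(x * q ^ i))
    (isCompact_closedBall 0 (|c| + 1))
    ((summable_geometric_of_lt_one (abs_nonneg q) hq).mul_left (|c| + 1))
    (Eventually.of_forall fun i x hx => by
      simp only [norm_neg, norm_mul, norm_pow, Real.norm_eq_abs]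
      exact mul_le_mul_of_nonneg_right (by simpa [K] using hx) (by positivity))
    (fun i => by fun_prop)
  refine (hprod.tendstoUniformlyOn.continuousOn
    (Frequently.of_forall fun s => by fun_prop)).congr fun x _ => ?_
  simp [qpochInf, sub_eq_add_neg]

theorem tendsto_qpochInf_mul_pow (hq : |q| < 1) (c : ℝ) :
    Tendsto (fun k : ℕ => qpochInf (c * q ^ k) q) atTop (𝓝 1) := by
  have h := ((continuous_qpochInf hq).tendsto 0).comp
    (by simpa using (tendsto_pow_atTop_nhds_zero_of_abs_lt_one hq).const_mul c)
  simpa [Function.comp_def] using h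

theorem qpochInf_mul_qpochInf_mul_eq_of_recurrence (hq : |q| < 1) {u : ℕ → ℝ}
    {b₁ b₂ c L : ℝ}
    (hu : ∀ k, (1 - c * q ^ k) * u (k + 1) = (1 - b₁ * q ^ k) * (1 - b₂ * q ^ k) * u k)
    (hL : Tendsto u atTop (𝓝 L)) :
    qpochInf b₁ q * qpochInf b₂ q * u 0 = qpochInf c q * L := by
  have hpartial : ∀ k, (∏ i ∈ Finset.range k, (1 - b₁ * q ^ i)) *
      (∏ i ∈ Finset.range k, (1 - b₂ * q ^ i)) * u 0 =
      (∏ i ∈ Finset.range k, (1 - c * q ^ i)) * u k := by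
    intro k
    induction k with
    | zero => simp
    | succ k ih =>
      simp only [Finset.prod_range_succ]
      linear_combination ((1 - b₁ * q ^ k) * (1 - b₂ * q ^ k)) * ih -
        (∏ i ∈ Finset.range k, (1 - c * q ^ i)) * hu k
  refine tendsto_nhds_unique ?_ ((hasProd_qpochInf hq c).tendsto_prod_nat.mul hL)
  exact (((hasProd_qpochInf hq b₁).tendsto_prod_nat.mul
    (hasProd_qpochInf hq b₂).tendsto_prod_nat).mul_const (u 0)).congr hpartial

end QPochhammer

/-- `∫_a^1 f d_q x = (1 - q) ∑ₙ jacksonTerm q a f n`. -/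
def jacksonTerm (q a : ℝ) (f : ℝ → ℝ) (n : ℕ) : ℝ :=
  q ^ n * (f (q ^ n) - a * f (a * q ^ n))

def jacksonLattice (q a : ℝ) : Set ℝ :=
  Set.range (fun n : ℕ => q ^ n) ∪ Set.range (fun n : ℕ => a * q ^ n)

section Jackson

variable {q a : ℝ}

theorem tsum_jacksonTerm_of_telescope {f ψ : ℝ → ℝ}
    (hψ : ∀ x ∈ jacksonLattice q a, ψ x - ψ (q * x) = x * f x)
    (hf : Summable (jacksonTerm q a f))
    (hlim : Tendsto (fun n : ℕ => ψ (q ^ n) - ψ (a * q ^ n)) atTop (𝓝 0)) :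
    ∑' n, jacksonTerm q a f n = ψ 1 - ψ a := by
  set D := fun n : ℕ => ψ (q ^ n) - ψ (a * q ^ n)
  have hterm : ∀ n, jacksonTerm q a f n = D n - D (n + 1) := by
    intro n
    have h₁ := hψ _ (Or.inl ⟨n, rfl⟩)
    have h₂ := hψ _ (Or.inr ⟨n, rfl⟩)
    simp only [D, jacksonTerm, pow_succ', mul_left_comm a q] at h₁ h₂ ⊢
    linear_combination h₂ - h₁
  have hpartial : ∀ N, ∑ n ∈ Finset.range N, jacksonTerm q a f n = D 0 - D N := fun N => by
    rw [Finset.sum_congr rfl fun n _ => hterm n, Finset.sum_range_sub']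
  have h := tendsto_nhds_unique hf.hasSum.tendsto_sum_nat
    ((tendsto_const_nhds.sub hlim).congr fun N => (hpartial N).symm)
  simpa [D] using h

theorem abs_jacksonTerm_le {f : ℝ → ℝ} {C : ℝ} (hq : 0 ≤ q)
    (hf : ∀ x ∈ jacksonLattice q a, |f x| ≤ C) (n : ℕ) :
    |jacksonTerm q a f n| ≤ (1 + |a|) * C * q ^ n := by
  have h₁ := hf _ (Or.inl ⟨n, rfl⟩)
  have h₂ := hf _ (Or.inr ⟨n, rfl⟩)
  rw [jacksonTerm, abs_mul, abs_of_nonneg (pow_nonneg hq n)]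
  calc q ^ n * |f (q ^ n) - a * f (a * q ^ n)|
      ≤ q ^ n * (|f (q ^ n)| + |a| * |f (a * q ^ n)|) := by
        gcongr
        exact (abs_sub _ _).trans_eq (by rw [abs_mul])
    _ ≤ q ^ n * (C + |a| * C) := by gcongr
    _ = (1 + |a|) * C * q ^ n := by ring

theorem summable_jacksonTerm {f : ℝ → ℝ} {C : ℝ} (hq0 : 0 ≤ q) (hq1 : q < 1)
    (hf : ∀ x ∈ jacksonLattice q a, |f x| ≤ C) : Summable (jacksonTerm q a f) :=
  .of_norm_bounded ((summable_geometric_of_lt_one hq0 hq1).mul_left _)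
    (abs_jacksonTerm_le hq0 hf)

theorem pow_mul_le_of_le {d r : ℝ} (hq0 : 0 ≤ q) (hq1 : q ≤ 1) (hd : d ≤ r) (hr : 0 ≤ r)
    (n : ℕ) :
    q ^ n * d ≤ r := by
  rcases le_or_gt d 0 with h | h
  · exact (mul_nonpos_of_nonneg_of_nonpos (pow_nonneg hq0 n) h).trans hr
  · exact (mul_le_of_le_one_left h.le (pow_le_one₀ hq0 hq1)).trans hd

theorem le_pow_mul_of_le {d r : ℝ} (hq0 : 0 ≤ q) (hq1 : q ≤ 1) (hd : r ≤ d) (hr : r ≤ 0)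
    (n : ℕ) :
    r ≤ q ^ n * d := by
  have := pow_mul_le_of_le hq0 hq1 (neg_le_neg hd) (neg_nonneg.2 hr) n
  linarith

theorem pow_mul_lt_one {d : ℝ} (hq0 : 0 ≤ q) (hq1 : q ≤ 1) (hd : d < 1) (n : ℕ) :
    q ^ n * d < 1 :=
  (pow_mul_le_of_le hq0 hq1 (le_max_left d 0) (le_max_right d 0) n).trans_lt (max_lt hd one_pos)

theorem mul_le_of_mem_jacksonLattice {x c r : ℝ} (hq0 : 0 ≤ q) (hq1 : q ≤ 1)
    (hx : x ∈ jacksonLattice q a) (hc : c ≤ r) (hac : a * c ≤ r) (hr : 0 ≤ r) :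
    x * c ≤ r := by
  rcases hx with ⟨n, rfl⟩ | ⟨n, rfl⟩
  · exact pow_mul_le_of_le hq0 hq1 hc hr n
  · simpa only [mul_comm a, mul_assoc] using pow_mul_le_of_le hq0 hq1 hac hr n

theorem le_mul_of_mem_jacksonLattice {x c r : ℝ} (hq0 : 0 ≤ q) (hq1 : q ≤ 1)
    (hx : x ∈ jacksonLattice q a) (hc : r ≤ c) (hac : r ≤ a * c) (hr : r ≤ 0) :
    r ≤ x * c := by
  rcases hx with ⟨n, rfl⟩ | ⟨n, rfl⟩
  · exact le_pow_mul_of_le hq0 hq1 hc hr n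
  · simpa only [mul_comm a, mul_assoc] using le_pow_mul_of_le hq0 hq1 hac hr n

theorem mul_le_max_of_mem_jacksonLattice {x : ℝ} (hq0 : 0 ≤ q) (hq1 : q ≤ 1)
    (hx : x ∈ jacksonLattice q a) (c : ℝ) : x * c ≤ max (max c (a * c)) 0 :=
  mul_le_of_mem_jacksonLattice hq0 hq1 hx ((le_max_left _ _).trans (le_max_left _ _))
    ((le_max_right _ _).trans (le_max_left _ _)) (le_max_right _ _)

theorem mul_lt_one_of_mem_jacksonLattice {x c : ℝ} (hq0 : 0 ≤ q) (hq1 : q ≤ 1)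
    (hx : x ∈ jacksonLattice q a) (hc : c < 1) (hac : a * c < 1) : x * c < 1 :=
  (mul_le_max_of_mem_jacksonLattice hq0 hq1 hx c).trans_lt (max_lt (max_lt hc hac) one_pos)

end Jackson

noncomputable def bilinearIntegrand (q a y t x : ℝ) : ℝ :=
  qpochInf (q * x) q * qpochInf (q * x / a) q / (qpochInf (x * y) q * qpochInf (x * t) q)

noncomputable def bilinearPotential (q a y t x : ℝ) : ℝ :=
  qpochInf x q * qpochInf (x / a) q / (qpochInf (x * y) q * qpochInf (x * t) q)

noncomputable def bilinearSum (q a y t : ℝ) : ℝ :=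
  ∑' n, jacksonTerm q a (bilinearIntegrand q a y t) n

section Integrand

variable {q a : ℝ}

theorem bilinearIntegrand_comm (q a y t : ℝ) :
    bilinearIntegrand q a y t = bilinearIntegrand q a t y :=
  funext fun x => by rw [bilinearIntegrand, bilinearIntegrand, mul_comm (qpochInf (x * y) q)]

theorem bilinearSum_comm (q a y t : ℝ) : bilinearSum q a y t = bilinearSum q a t y := by
  rw [bilinearSum, bilinearSum, bilinearIntegrand_comm]

theorem bilinearPotential_sub_bilinearPotential_mul (hq : |q| < 1) (ha : a ≠ 0) {y t x : ℝ}
    (hy : qpochInf (x * y) q ≠ 0) (ht : qpochInf (x * t) q ≠ 0) :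
    bilinearPotential q a y t x - bilinearPotential q a y t (q * x) =
      x * ((y + t - 1 - a⁻¹) + (a⁻¹ - y * t) * x) * bilinearIntegrand q a y t x := by
  rw [qpochInf_eq_one_sub_mul hq] at hy ht
  obtain ⟨hy₁, hy₂⟩ := mul_ne_zero_iff.1 hy
  obtain ⟨ht₁, ht₂⟩ := mul_ne_zero_iff.1 ht
  simp only [bilinearPotential, bilinearIntegrand]
  rw [qpochInf_eq_one_sub_mul hq x, qpochInf_eq_one_sub_mul hq (x / a),
    qpochInf_eq_one_sub_mul hq (x * y), qpochInf_eq_one_sub_mul hq (x * t),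
    show q * x * y = x * y * q by ring, show q * x * t = x * t * q by ring,
    show x / a * q = q * x / a by ring, mul_comm x q]
  field_simp
  ring

theorem bilinearIntegrand_q_mul (hq : |q| < 1) {y t x : ℝ} (ht : qpochInf (x * t) q ≠ 0) :
    bilinearIntegrand q a y (q * t) x = (1 - x * t) * bilinearIntegrand q a y t x := by
  rw [qpochInf_eq_one_sub_mul hq] at ht
  obtain ⟨ht₁, ht₂⟩ := mul_ne_zero_iff.1 ht
  simp only [bilinearIntegrand]
  rw [qpochInf_eq_one_sub_mul hq (x * t), show x * (q * t) = x * t * q by ring]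
  field_simp

theorem tendsto_bilinearPotential_mul_pow (hq : |q| < 1) (y t c : ℝ) :
    Tendsto (fun n : ℕ => bilinearPotential q a y t (c * q ^ n)) atTop (𝓝 1) := by
  have h := ((tendsto_qpochInf_mul_pow hq c).mul (tendsto_qpochInf_mul_pow hq (c / a))).div
    ((tendsto_qpochInf_mul_pow hq (c * y)).mul (tendsto_qpochInf_mul_pow hq (c * t)))
    (by norm_num)
  simp only [mul_one, div_one] at h
  refine h.congr fun n => ?_
  simp only [bilinearPotential, Pi.div_apply]
  ring_nf

theorem tendsto_bilinearIntegrand_pow_mul (hq : |q| < 1) (y t x : ℝ) :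
    Tendsto (fun k : ℕ => bilinearIntegrand q a y (q ^ k * t) x) atTop
      (𝓝 (bilinearIntegrand q a y 0 x)) := by
  have h := tendsto_const_nhds.div (tendsto_qpochInf_mul_pow hq (x * t)) one_ne_zero
    (a := qpochInf (q * x) q * qpochInf (q * x / a) q / qpochInf (x * y) q)
  rw [div_one] at h
  simp only [bilinearIntegrand, mul_zero, qpochInf_zero_left, mul_one]
  refine h.congr fun k => ?_
  rw [Pi.div_apply, div_mul_eq_div_div, show x * (q ^ k * t) = x * t * q ^ k by ring]

theorem abs_bilinearIntegrand_le (hq0 : 0 ≤ q) (hq1 : q < 1) (ha : a < 0) {y t x r s : ℝ}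
    (hx : x ∈ jacksonLattice q a) (hy : x * y ≤ r) (hr : r < 1) (ht : x * t ≤ s)
    (hs : s < 1) :
    |bilinearIntegrand q a y t x| ≤
      qpochInf (a * q) q * qpochInf (q / a) q / (qpochInf r q * qpochInf s q) := by
  have hqa : q / a ≤ 0 := div_nonpos_of_nonneg_of_nonpos hq0 ha.le
  have haq : a * q ≤ 0 := mul_nonpos_of_nonpos_of_nonneg ha.le hq0
  have hqa' : a * (q / a) = q := mul_div_cancel₀ q ha.ne
  have hx₁ : q * x < 1 := by
    rw [mul_comm]; exact mul_lt_one_of_mem_jacksonLattice hq0 hq1.le hx hq1 (by linarith)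
  have hx₂ : q * x / a < 1 := by
    rw [mul_div_right_comm, mul_comm]
    exact mul_lt_one_of_mem_jacksonLattice hq0 hq1.le hx (by linarith) (by rwa [hqa'])
  have hN₁ : qpochInf (q * x) q ≤ qpochInf (a * q) q := by
    refine qpochInf_anti hq0 hq1 ?_ hx₁
    rw [mul_comm q]
    exact le_mul_of_mem_jacksonLattice hq0 hq1.le hx (by linarith) le_rfl haq
  have hN₂ : qpochInf (q * x / a) q ≤ qpochInf (q / a) q := by
    refine qpochInf_anti hq0 hq1 ?_ hx₂
    rw [mul_div_right_comm, mul_comm _ x]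
    exact le_mul_of_mem_jacksonLattice hq0 hq1.le hx le_rfl (by rw [hqa']; linarith) hqa
  have hD₁ : qpochInf r q ≤ qpochInf (x * y) q := qpochInf_anti hq0 hq1 hy hr
  have hD₂ : qpochInf s q ≤ qpochInf (x * t) q := qpochInf_anti hq0 hq1 ht hs
  have := qpochInf_pos hq0 hq1 hx₁
  have := qpochInf_pos hq0 hq1 hx₂
  have := qpochInf_pos hq0 hq1 (haq.trans_lt one_pos)
  have := qpochInf_pos hq0 hq1 (hqa.trans_lt one_pos)
  have hr₀ := qpochInf_pos hq0 hq1 hr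
  have hs₀ := qpochInf_pos hq0 hq1 hs
  have := hr₀.trans_le hD₁
  have := hs₀.trans_le hD₂
  rw [bilinearIntegrand, abs_of_nonneg (by positivity)]
  gcongr

end Integrand

section BilinearSum

variable {q a : ℝ}

theorem summable_jacksonTerm_bilinearIntegrand (hq0 : 0 ≤ q) (hq1 : q < 1) (ha : a < 0)
    {y t : ℝ} (hy : y < 1) (hay : a * y < 1) (ht : t < 1) (hat : a * t < 1) :
    Summable (jacksonTerm q a (bilinearIntegrand q a y t)) :=
  summable_jacksonTerm hq0 hq1 fun _ hx => abs_bilinearIntegrand_le hq0 hq1 ha hx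
    (mul_le_max_of_mem_jacksonLattice hq0 hq1.le hx y) (max_lt (max_lt hy hay) one_pos)
    (mul_le_max_of_mem_jacksonLattice hq0 hq1.le hx t) (max_lt (max_lt ht hat) one_pos)

theorem one_sub_mul_bilinearSum_q_mul (hq0 : 0 ≤ q) (hq1 : q < 1) (ha : a < 0) {y t : ℝ}
    (hy : y < 1) (hay : a * y < 1) (ht : t < 1) (hat : a * t < 1) :
    (1 - a * y * t) * bilinearSum q a y (q * t) =
      (1 - t) * (1 - a * t) * bilinearSum q a y t := by
  have hq : |q| < 1 := by rwa [abs_of_nonneg hq0]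
  have hsum₁ := summable_jacksonTerm_bilinearIntegrand hq0 hq1 ha hy hay
    (by simpa using pow_mul_lt_one hq0 hq1.le ht 1)
    (by simpa [mul_left_comm a] using pow_mul_lt_one hq0 hq1.le hat 1)
  have hsum₂ := summable_jacksonTerm_bilinearIntegrand hq0 hq1 ha hy hay ht hat
  set H : ℝ → ℝ := fun x => (1 - a * y * t) * bilinearIntegrand q a y (q * t) x -
    (1 - t) * (1 - a * t) * bilinearIntegrand q a y t x
  have hH : jacksonTerm q a H = fun n =>
      (1 - a * y * t) * jacksonTerm q a (bilinearIntegrand q a y (q * t)) n -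
        (1 - t) * (1 - a * t) * jacksonTerm q a (bilinearIntegrand q a y t) n := by
    funext n
    simp only [jacksonTerm, H]
    ring
  -- The factor `-(a t)` makes `-(a t) (α + β x) = (1 - a y t)(1 - x t) - (1 - t)(1 - a t)`.
  have hψ : ∀ x ∈ jacksonLattice q a, -(a * t) * bilinearPotential q a y t x -
      -(a * t) * bilinearPotential q a y t (q * x) = x * H x := by
    intro x hx
    have hxy := (qpochInf_pos hq0 hq1 (mul_lt_one_of_mem_jacksonLattice hq0 hq1.le hx hy hay)).ne'
    have hxt := (qpochInf_pos hq0 hq1 (mul_lt_one_of_mem_jacksonLattice hq0 hq1.le hx ht hat)).ne'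
    have ha₀ := ha.ne
    simp only [H]
    rw [← mul_sub, bilinearPotential_sub_bilinearPotential_mul hq ha₀ hxy hxt,
      bilinearIntegrand_q_mul hq hxt]
    field_simp
    ring
  have hlim : Tendsto (fun n : ℕ => -(a * t) * bilinearPotential q a y t (q ^ n) -
      -(a * t) * bilinearPotential q a y t (a * q ^ n)) atTop (𝓝 0) := by
    have h := ((tendsto_bilinearPotential_mul_pow (a := a) hq y t 1).const_mul (-(a * t))).sub
      ((tendsto_bilinearPotential_mul_pow (a := a) hq y t a).const_mul (-(a * t)))
    simpa using h
  have h := tsum_jacksonTerm_of_telescope hψ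
    (hH ▸ (hsum₁.mul_left _).sub (hsum₂.mul_left _)) hlim
  rw [hH, (hsum₁.mul_left _).tsum_sub (hsum₂.mul_left _), tsum_mul_left, tsum_mul_left] at h
  simp only [bilinearPotential, one_mul, div_self ha.ne, qpochInf_one_left hq, zero_mul, zero_div,
    mul_zero, sub_zero] at h
  rw [bilinearSum, bilinearSum]
  linarith

theorem tendsto_bilinearSum_pow_mul (hq0 : 0 ≤ q) (hq1 : q < 1) (ha : a < 0) {y t : ℝ}
    (hy : y < 1) (hay : a * y < 1) (ht : t < 1) (hat : a * t < 1) :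
    Tendsto (fun k : ℕ => bilinearSum q a y (q ^ k * t)) atTop
      (𝓝 (bilinearSum q a y 0)) := by
  have hq : |q| < 1 := by rwa [abs_of_nonneg hq0]
  set r := max (max y (a * y)) 0
  set s := max (max t (a * t)) 0
  refine tendsto_tsum_of_dominated_convergence
    ((summable_geometric_of_lt_one hq0 hq1).mul_left ((1 + |a|) *
      (qpochInf (a * q) q * qpochInf (q / a) q / (qpochInf r q * qpochInf s q))))
    (fun n => ?_) (Eventually.of_forall fun k n => ?_)
  · exact ((tendsto_bilinearIntegrand_pow_mul hq y t _).sub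
      ((tendsto_bilinearIntegrand_pow_mul hq y t _).const_mul a)).const_mul _
  · refine abs_jacksonTerm_le hq0 (fun _ hx => abs_bilinearIntegrand_le hq0 hq1 ha hx
      (mul_le_max_of_mem_jacksonLattice hq0 hq1.le hx y) (max_lt (max_lt hy hay) one_pos)
      (mul_le_of_mem_jacksonLattice hq0 hq1.le hx ?_ ?_ (le_max_right _ _))
      (max_lt (max_lt ht hat) one_pos)) n
    · exact pow_mul_le_of_le hq0 hq1.le ((le_max_left _ _).trans (le_max_left _ _))
        (le_max_right _ _) k
    · rw [mul_left_comm]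
      exact pow_mul_le_of_le hq0 hq1.le ((le_max_right _ _).trans (le_max_left _ _))
        (le_max_right _ _) k

theorem qpochInf_mul_qpochInf_mul_bilinearSum (hq0 : 0 ≤ q) (hq1 : q < 1) (ha : a < 0)
    {y t : ℝ} (hy : y < 1) (hay : a * y < 1) (ht : t < 1) (hat : a * t < 1) :
    qpochInf t q * qpochInf (a * t) q * bilinearSum q a y t =
      qpochInf (a * y * t) q * bilinearSum q a y 0 := by
  have hq : |q| < 1 := by rwa [abs_of_nonneg hq0]
  have h := qpochInf_mul_qpochInf_mul_eq_of_recurrence hq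
    (u := fun k => bilinearSum q a y (q ^ k * t)) (b₁ := t) (b₂ := a * t) (c := a * y * t)
    (fun k => ?_)
    (tendsto_bilinearSum_pow_mul hq0 hq1 ha hy hay ht hat)
  · simpa using h
  · have h := one_sub_mul_bilinearSum_q_mul hq0 hq1 ha hy hay (pow_mul_lt_one hq0 hq1.le ht k)
      (by simpa [mul_left_comm a] using pow_mul_lt_one hq0 hq1.le hat k)
    rw [show q * (q ^ k * t) = q ^ (k + 1) * t by ring] at h
    linear_combination h

theorem bilinearSum_zero_q (hq0 : 0 ≤ q) (hq1 : q < 1) (ha : a < 0) :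
    bilinearSum q a 0 q = -a * qpochInf a⁻¹ q := by
  have hq : |q| < 1 := by rwa [abs_of_nonneg hq0]
  have haq : a * q < 1 := (mul_nonpos_of_nonpos_of_nonneg ha.le hq0).trans_lt one_pos
  have hψ : ∀ x ∈ jacksonLattice q a, -a * qpochInf (x / a) q - -a * qpochInf (q * x / a) q =
      x * bilinearIntegrand q a 0 q x := by
    intro x hx
    have ha₀ := ha.ne
    have hxq := (qpochInf_pos hq0 hq1 (mul_lt_one_of_mem_jacksonLattice hq0 hq1.le hx hq1 haq)).ne'
    rw [qpochInf_eq_one_sub_mul hq (x / a), bilinearIntegrand, mul_zero, qpochInf_zero_left,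
      one_mul, mul_comm q x]
    field_simp
    ring
  have hlim : Tendsto (fun n : ℕ => -a * qpochInf (q ^ n / a) q - -a * qpochInf (a * q ^ n / a) q)
      atTop (𝓝 0) := by
    have h := ((tendsto_qpochInf_mul_pow hq a⁻¹).const_mul (-a)).sub
      ((tendsto_qpochInf_mul_pow hq 1).const_mul (-a))
    simp only [mul_one, sub_self] at h
    refine h.congr fun n => ?_
    rw [mul_div_cancel_left₀ _ ha.ne, one_mul, inv_mul_eq_div]
  have h := tsum_jacksonTerm_of_telescope hψ
    (summable_jacksonTerm_bilinearIntegrand hq0 hq1 ha zero_lt_one (by simp) hq1 haq) hlim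
  rw [bilinearSum, h, div_self ha.ne, qpochInf_one_left hq, one_div]
  ring

theorem bilinearSum_zero_zero (hq0 : 0 ≤ q) (hq1 : q < 1) (ha : a < 0) :
    bilinearSum q a 0 0 = qpochInf q q * qpochInf a q * qpochInf (q / a) q := by
  have hq : |q| < 1 := by rwa [abs_of_nonneg hq0]
  have h := qpochInf_mul_qpochInf_mul_bilinearSum hq0 hq1 ha zero_lt_one (by simp) hq1
    ((mul_nonpos_of_nonpos_of_nonneg ha.le hq0).trans_lt one_pos)
  rw [bilinearSum_zero_q hq0 hq1 ha, mul_zero, zero_mul, qpochInf_zero_left, one_mul] at h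
  have ha₀ := ha.ne
  rw [← h, qpochInf_eq_one_sub_mul hq a, qpochInf_eq_one_sub_mul hq a⁻¹, inv_mul_eq_div]
  field_simp
  ring

end BilinearSum

/-- Evaluation of the bilinear generating function of the Al-Salam–Carlitz
functional via the Jackson q-integral. -/
theorem al_salam_carlitz_bilinear (q a y t : ℝ)
    (hq0 : 0 < q) (hq1 : q < 1) (ha : a < 0)
    (hy : |y| < 1) (hay : |a * y| < 1) (ht : |t| < 1) (hat : |a * t| < 1) :
    Summable (fun n : ℕ =>
      |q ^ n *
        ((qpochInf (q * q ^ n) q * qpochInf (q * q ^ n / a) q /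
            (qpochInf (q ^ n * y) q * qpochInf (q ^ n * t) q)) -
          a * (qpochInf (q * (a * q ^ n)) q * qpochInf (q * (a * q ^ n) / a) q /
            (qpochInf ((a * q ^ n) * y) q * qpochInf ((a * q ^ n) * t) q)))|) ∧
    (qpochInf y q * qpochInf (a * y) q /
        (qpochInf q q * qpochInf a q * qpochInf (q / a) q)) *
      (∑' n : ℕ, q ^ n *
        ((qpochInf (q * q ^ n) q * qpochInf (q * q ^ n / a) q /
            (qpochInf (q ^ n * y) q * qpochInf (q ^ n * t) q)) -
          a * (qpochInf (q * (a * q ^ n)) q * qpochInf (q * (a * q ^ n) / a) q /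
            (qpochInf ((a * q ^ n) * y) q * qpochInf ((a * q ^ n) * t) q)))) =
    qpochInf (a * y * t) q / (qpochInf t q * qpochInf (a * t) q) := by
  replace hy := (abs_lt.1 hy).2
  replace hay := (abs_lt.1 hay).2
  replace ht := (abs_lt.1 ht).2
  replace hat := (abs_lt.1 hat).2
  change Summable (fun n => |jacksonTerm q a (bilinearIntegrand q a y t) n|) ∧
    _ * bilinearSum q a y t = _
  refine ⟨(summable_jacksonTerm_bilinearIntegrand hq0.le hq1 ha hy hay ht hat).abs, ?_⟩
  have hyt := qpochInf_mul_qpochInf_mul_bilinearSum hq0.le hq1 ha hy hay ht hat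
  have hy0 := qpochInf_mul_qpochInf_mul_bilinearSum hq0.le hq1 ha zero_lt_one (by simp) hy hay
  rw [mul_zero, zero_mul, qpochInf_zero_left, one_mul, bilinearSum_comm,
    bilinearSum_zero_zero hq0.le hq1 ha] at hy0
  have := qpochInf_pos hq0.le hq1 hy
  have := qpochInf_pos hq0.le hq1 hay
  have := qpochInf_pos hq0.le hq1 ht
  have := qpochInf_pos hq0.le hq1 hat
  have := qpochInf_pos hq0.le hq1 hq1
  have := qpochInf_pos hq0.le hq1 (ha.trans one_pos)
  have := qpochInf_pos hq0.le hq1 ((div_neg_of_pos_of_neg hq0 ha).trans one_pos)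
  rw [div_mul_eq_mul_div, div_eq_div_iff (by positivity) (by positivity)]
  linear_combination (qpochInf y q * qpochInf (a * y) q) * hyt + qpochInf (a * y * t) q * hy0
end

section
/- For all m, n ∈ ℕ and x ∈ ℝ, the Hermite polynomials satisfy the convolution identity H_{m+n}(x)/(m! n!) = Σ_{k=0}^{min(m,n)} ((-2)^k/k!) · (H_{m-k}(x)/(m-k)!) · (H_{n-k}(x)/(n-k)!). -/
/-- The physicists' Hermite polynomial `H_n(x)`. -/
noncomputable def hermiteH (n : ℕ) (x : ℝ) : ℝ :=
  (n.factorial : ℝ) *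
    ∑ k ∈ Finset.range (n / 2 + 1),
      (-1) ^ k * (2 * x) ^ (n - 2 * k) / (k.factorial * (n - 2 * k).factorial)

/-!
Clearing denominators, the right-hand side becomes
`U(m, n) = ∑ₖ C(n, k) (-2)ᵏ m(m-1)⋯(m-k+1) H_{m-k} H_{n-k}`. Pascal's rule for `C(n+1, k)`
and the three-term recurrence `H_{j+1} = 2x H_j - 2j H_{j-1}` give
`U(m, n+1) = 2x U(m, n) - 2m U(m-1, n) - 2n U(m, n-1)`; by the same three-term recurrence
`H_{m+n}` satisfies this too, so `U(m, n) = H_{m+n}` by induction on `n`. The three-term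
recurrence itself is checked term by term on the explicit formula.
-/

open Finset
open scoped Nat

lemma sum_range_succ_choose_mul_sub {R : Type*} [CommSemiring R] (n : ℕ) (f : ℕ → R) :
    ∑ i ∈ range (n + 1), (n.choose i * (n - i : ℕ) : R) * f i =
      n * ∑ i ∈ range n, ((n - 1).choose i : R) * f i := by
  cases n with
  | zero => simp
  | succ n =>
    rw [sum_range_succ, Nat.sub_self, Nat.cast_zero, mul_zero, zero_mul, add_zero, mul_sum]
    refine sum_congr rfl fun i _ => ?_
    rw [Nat.add_sub_cancel, ← mul_assoc]
    congr 1
    norm_cast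
    rw [← Nat.choose_mul_succ_eq, mul_comm]

section Hermite

variable (x : ℝ)

-- The guard lets the explicit sum run over any range past `n / 2`.
noncomputable def hermiteTerm (n k : ℕ) : ℝ :=
  if 2 * k ≤ n then (-1) ^ k * (2 * x) ^ (n - 2 * k) / (k ! * (n - 2 * k)!) else 0

lemma hermiteTerm_two_mul_add (k j : ℕ) :
    hermiteTerm x (2 * k + j) k = (-1) ^ k * (2 * x) ^ j / (k ! * j !) := by
  simp [hermiteTerm]

lemma hermiteTerm_of_lt {n k : ℕ} (h : n < 2 * k) : hermiteTerm x n k = 0 :=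
  if_neg (by omega)

lemma hermiteH_eq_sum_hermiteTerm {n N : ℕ} (hN : n / 2 < N) :
    hermiteH n x = n ! * ∑ k ∈ range N, hermiteTerm x n k := by
  rw [hermiteH, ← sum_subset (range_subset_range.2 (by omega : n / 2 + 1 ≤ N))]
  · refine congrArg _ (sum_congr rfl fun k hk => (if_pos ?_).symm)
    rw [mem_range] at hk
    omega
  · intro k _ hk
    rw [mem_range, not_lt] at hk
    exact hermiteTerm_of_lt x (by omega)

lemma add_two_mul_hermiteTerm_zero (n : ℕ) :
    (n + 2 : ℝ) * hermiteTerm x (n + 2) 0 = 2 * x * hermiteTerm x (n + 1) 0 := by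
  simp only [hermiteTerm, mul_zero, zero_le, if_true, Nat.sub_zero]
  push_cast [Nat.factorial_succ]
  field_simp
  ring

lemma add_two_mul_hermiteTerm_succ (n k : ℕ) :
    (n + 2 : ℝ) * hermiteTerm x (n + 2) (k + 1) =
      2 * x * hermiteTerm x (n + 1) (k + 1) - 2 * hermiteTerm x n k := by
  rcases lt_or_ge n (2 * k) with h | h
  · rw [hermiteTerm_of_lt x h, hermiteTerm_of_lt x (by omega : n + 1 < 2 * (k + 1)),
      hermiteTerm_of_lt x (by omega : n + 2 < 2 * (k + 1))]
    ring
  obtain ⟨j, rfl⟩ := exists_add_of_le h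
  rcases j with _ | j
  · rw [show 2 * k + 0 + 2 = 2 * (k + 1) + 0 by ring, hermiteTerm_two_mul_add,
      hermiteTerm_of_lt x (by omega : 2 * k + 0 + 1 < 2 * (k + 1)), hermiteTerm_two_mul_add]
    push_cast [Nat.factorial_succ]
    field_simp
    ring
  · rw [show 2 * k + (j + 1) + 2 = 2 * (k + 1) + (j + 1) by ring,
      show 2 * k + (j + 1) + 1 = 2 * (k + 1) + j by ring,
      hermiteTerm_two_mul_add, hermiteTerm_two_mul_add, hermiteTerm_two_mul_add]
    push_cast [Nat.factorial_succ]
    field_simp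
    ring

theorem hermiteH_add_two (n : ℕ) :
    hermiteH (n + 2) x = 2 * x * hermiteH (n + 1) x - 2 * (n + 1) * hermiteH n x := by
  have hsum : (n + 2 : ℝ) * ∑ k ∈ range (n / 2 + 1), hermiteTerm x (n + 2) (k + 1) =
      2 * x * ∑ k ∈ range (n / 2 + 1), hermiteTerm x (n + 1) (k + 1) -
        2 * ∑ k ∈ range (n / 2 + 1), hermiteTerm x n k := by
    simp only [mul_sum, ← sum_sub_distrib, add_two_mul_hermiteTerm_succ]
  rw [hermiteH_eq_sum_hermiteTerm x (by omega : (n + 2) / 2 < n / 2 + 2),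
    hermiteH_eq_sum_hermiteTerm x (by omega : (n + 1) / 2 < n / 2 + 2),
    hermiteH_eq_sum_hermiteTerm x (by omega : n / 2 < n / 2 + 1),
    sum_range_succ' (hermiteTerm x (n + 2)), sum_range_succ' (hermiteTerm x (n + 1)),
    Nat.factorial_succ (n + 1), Nat.factorial_succ n]
  push_cast
  linear_combination ((n + 1 : ℝ) * n !) * hsum +
    ((n + 1 : ℝ) * n !) * add_two_mul_hermiteTerm_zero x n

theorem hermiteH_zero : hermiteH 0 x = 1 := by
  simp [hermiteH]

theorem hermiteH_succ (n : ℕ) :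
    hermiteH (n + 1) x = 2 * x * hermiteH n x - 2 * n * hermiteH (n - 1) x := by
  cases n with
  | zero => simp [hermiteH]
  | succ n =>
    rw [hermiteH_add_two, Nat.add_sub_cancel]
    push_cast
    ring

lemma neg_two_pow_mul_descFactorial_succ_mul_hermiteH (m i : ℕ) :
    (-2 : ℝ) ^ (i + 1) * m.descFactorial (i + 1) * hermiteH (m - (i + 1)) x =
      -2 * m * ((-2) ^ i * (m - 1).descFactorial i * hermiteH (m - 1 - i) x) := by
  cases m with
  | zero => simp
  | succ m =>
    rw [Nat.succ_descFactorial_succ, Nat.add_sub_add_right, Nat.add_sub_cancel]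
    push_cast
    ring

-- `m ! * n !` times the right-hand side of the convolution identity.
noncomputable def hermiteConv (m n : ℕ) : ℝ :=
  ∑ k ∈ range (n + 1),
    (n.choose k : ℝ) * ((-2) ^ k * m.descFactorial k * hermiteH (m - k) x * hermiteH (n - k) x)

lemma hermiteConv_zero_right (m : ℕ) : hermiteConv x m 0 = hermiteH m x := by
  simp [hermiteConv, hermiteH_zero]

lemma hermiteConv_succ_right (m n : ℕ) :
    hermiteConv x m (n + 1) = 2 * x * hermiteConv x m n - 2 * m * hermiteConv x (m - 1) n -
      2 * n * hermiteConv x m (n - 1) := by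
  have pascal := sum_choose_succ_mul
    (fun i j => (-2 : ℝ) ^ i * m.descFactorial i * hermiteH (m - i) x * hermiteH j x) n
  have hpred : (n : ℝ) * ∑ i ∈ range n, ((n - 1).choose i : ℝ) *
      ((-2) ^ i * m.descFactorial i * hermiteH (m - i) x * hermiteH (n - 1 - i) x) =
      n * hermiteConv x m (n - 1) := by
    cases n with
    | zero => simp
    | succ n => simp only [hermiteConv, Nat.add_sub_cancel]
  have recurrence : ∑ i ∈ range (n + 1), (n.choose i : ℝ) *
      ((-2) ^ i * m.descFactorial i * hermiteH (m - i) x * hermiteH (n + 1 - i) x) =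
      2 * x * hermiteConv x m n - 2 * n * hermiteConv x m (n - 1) := by
    rw [mul_assoc 2 (n : ℝ), ← hpred, ← sum_range_succ_choose_mul_sub, hermiteConv, mul_sum,
      mul_sum, ← sum_sub_distrib]
    refine sum_congr rfl fun i hi => ?_
    rw [mem_range] at hi
    rw [show n + 1 - i = n - i + 1 by omega, hermiteH_succ, show n - i - 1 = n - 1 - i by omega]
    ring
  have shift : ∑ i ∈ range (n + 1), (n.choose i : ℝ) *
      ((-2) ^ (i + 1) * m.descFactorial (i + 1) * hermiteH (m - (i + 1)) x * hermiteH (n - i) x) =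
      -2 * m * hermiteConv x (m - 1) n := by
    simp only [hermiteConv, mul_sum, neg_two_pow_mul_descFactorial_succ_mul_hermiteH]
    exact sum_congr rfl fun i _ => by ring
  rw [hermiteConv, pascal, recurrence, shift]
  ring

theorem hermiteH_add_eq_hermiteConv (m n : ℕ) : hermiteH (m + n) x = hermiteConv x m n := by
  induction n using Nat.strong_induction_on generalizing m with
  | _ n ih =>
    cases n with
    | zero => exact (hermiteConv_zero_right x m).symm
    | succ n =>
      have hm : (m : ℝ) * hermiteH (m - 1 + n) x = m * hermiteH (m + n - 1) x := by
        rcases Nat.eq_zero_or_pos m with rfl | hm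
        · simp
        · rw [show m - 1 + n = m + n - 1 by omega]
      have hn : (n : ℝ) * hermiteH (m + (n - 1)) x = n * hermiteH (m + n - 1) x := by
        rcases Nat.eq_zero_or_pos n with rfl | hn
        · simp
        · rw [show m + (n - 1) = m + n - 1 by omega]
      rw [hermiteConv_succ_right, ← ih n (by omega), ← ih n (by omega),
        ← ih (n - 1) (by omega), ← add_assoc, hermiteH_succ]
      push_cast
      linear_combination 2 * hm + 2 * hn

end Hermite

/-- Convolution identity for the Hermite polynomials. -/
theorem hermite_convolution (m n : ℕ) (x : ℝ) :
    hermiteH (m + n) x / (m.factorial * n.factorial) =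
      ∑ k ∈ Finset.range (min m n + 1),
        ((-2 : ℝ) ^ k / k.factorial) *
          (hermiteH (m - k) x / (m - k).factorial) *
          (hermiteH (n - k) x / (n - k).factorial) := by
  rw [hermiteH_add_eq_hermiteConv, hermiteConv, sum_div,
    ← sum_subset (range_subset_range.2 (by omega : min m n + 1 ≤ n + 1))]
  · refine sum_congr rfl fun k hk => ?_
    rw [mem_range, Nat.lt_succ_iff, le_min_iff] at hk
    have hm := Nat.factorial_mul_descFactorial hk.1
    have hn := Nat.choose_mul_factorial_mul_factorial hk.2
    have hchoose : (n.choose k : ℝ) ≠ 0 := Nat.cast_ne_zero.2 (Nat.choose_pos hk.2).ne'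
    have hdesc : (m.descFactorial k : ℝ) ≠ 0 :=
      Nat.cast_ne_zero.2 (Nat.descFactorial_eq_zero_iff_lt.not.2 hk.1.not_gt)
    rw [← hm, ← hn]
    push_cast
    field_simp
  · intro k hkn hk
    rw [mem_range] at hkn hk
    have hkm : m < k := by omega
    simp [Nat.descFactorial_eq_zero_iff_lt.2 hkm]
end
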